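/- arXiv:1503.06370 — 2 statements merged into one kernel-verified Lean document; each statement's English description precedes it below -/
import Mathlib

section
/- Let X be an n×p real matrix with XᵀX = diag(d₁,…,d_p), dⱼ > 0 (orthogonal design), y ∈ ℝⁿ, σ² > 0, κ > 0, a > 0, b > 0, and G = diag(g₁,…,g_p) with gⱼ ∈ (0,1). Then the (unnormalized) marginal posterior density of G factorizes as a product over coordinates: det(G)ᵃ · det(I−G)^{b−1} · det(XᵀX + κ⁻¹ G XᵀX G)^{−1/2} · exp{(1/(2σ²)) yᵀX(XᵀX + κ⁻¹ G XᵀX G)⁻¹Xᵀy} = κ^{p/2}(∏ⱼ dⱼ)^{−1/2} · ∏ⱼ [ gⱼᵃ (1−gⱼ)^{b−1} (κ + gⱼ²)^{−1/2} exp{ κ(xⱼᵀy)² / (2σ² dⱼ (κ + gⱼ²)) } ]. Hence the gⱼ's are a posteriori independent under orthogonality. -/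
/-! With an orthogonal design every matrix in the posterior is diagonal: its determinant is the
product of the diagonal entries, its inverse is taken entrywise and the quadratic form in the
exponent is a sum over coordinates, so the exponential of it is a product. -/

open Matrix Finset

namespace Matrix

variable {m ι K : Type*} [DecidableEq ι]

theorem one_sub_diagonal [Ring K] (v : ι → K) : 1 - diagonal v = diagonal fun i => 1 - v i := by
  rw [← diagonal_one, diagonal_sub]

variable [Fintype ι]

theorem det_diagonal_rpow {v : ι → ℝ} (hv : ∀ i, 0 ≤ v i) (r : ℝ) :
    (diagonal v).det ^ r = ∏ i, v i ^ r := by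
  rw [det_diagonal, Real.finsetProd_rpow _ _ fun i _ => hv i]

theorem inv_diagonal_of_ne_zero [Field K] {v : ι → K} (hv : ∀ i, v i ≠ 0) :
    (diagonal v)⁻¹ = diagonal v⁻¹ :=
  inv_eq_right_inv <| by
    rw [diagonal_mul_diagonal, ← diagonal_one]
    exact congrArg diagonal (funext fun i => mul_inv_cancel₀ (hv i))

theorem diagonal_add_smul_diagonal_mul_diagonal_mul_diagonal [CommRing K] (d g : ι → K)
    (c : K) :
    diagonal d + c • (diagonal g * diagonal d * diagonal g)
      = diagonal fun i => d i * (1 + c * g i ^ 2) := by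
  rw [diagonal_mul_diagonal, diagonal_mul_diagonal, ← diagonal_smul, diagonal_add]
  congr 1
  funext i
  simp only [Pi.smul_apply, smul_eq_mul]
  ring

theorem dotProduct_mulVec_diagonal_mulVec_transpose_mulVec [Fintype m] [CommRing K]
    (X : Matrix m ι K) (w : ι → K) (y : m → K) :
    y ⬝ᵥ (X *ᵥ (diagonal w *ᵥ (Xᵀ *ᵥ y))) = ∑ i, w i * (Xᵀ *ᵥ y) i ^ 2 := by
  rw [dotProduct_mulVec, ← mulVec_transpose]
  simp only [dotProduct, mulVec_diagonal]
  exact sum_congr rfl fun i _ => by ring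

end Matrix

theorem Real.rpow_neg_half_mul_one_add_inv_mul {κ δ t : ℝ} (hκ : 0 < κ) (hδ : 0 ≤ δ)
    (ht : 0 ≤ t) :
    (δ * (1 + κ⁻¹ * t)) ^ (-(1 : ℝ) / 2)
      = κ ^ ((1 : ℝ) / 2) * δ ^ (-(1 : ℝ) / 2) * (κ + t) ^ (-(1 : ℝ) / 2) := by
  have hsplit : δ * (1 + κ⁻¹ * t) = δ * (κ + t) * κ⁻¹ := by field_simp
  rw [hsplit, Real.mul_rpow (by positivity) (by positivity), Real.mul_rpow hδ (by positivity),
    Real.inv_rpow hκ.le, ← Real.rpow_neg hκ.le]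
  norm_num
  ring

theorem kappaG_posterior_G_factorizes_general {n p : ℕ} (X : Matrix (Fin n) (Fin p) ℝ)
    (y : Fin n → ℝ) (d : Fin p → ℝ) (hd : ∀ j, 0 < d j)
    (hX : Xᵀ * X = Matrix.diagonal d) (σ2 κ a b : ℝ)
    (hκ : 0 < κ)
    (g : Fin p → ℝ) (hg : ∀ j, g j ∈ Set.Ioo (0 : ℝ) 1) :
    (Matrix.diagonal g).det ^ a * (1 - Matrix.diagonal g).det ^ (b - 1)
        * (Xᵀ * X + κ⁻¹ • (Matrix.diagonal g * (Xᵀ * X) * Matrix.diagonal g)).det ^ (-(1 : ℝ) / 2)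
        * Real.exp ((1 / (2 * σ2)) * (y ⬝ᵥ (X *ᵥ
            ((Xᵀ * X + κ⁻¹ • (Matrix.diagonal g * (Xᵀ * X) * Matrix.diagonal g))⁻¹
              *ᵥ (Xᵀ *ᵥ y)))))
      = κ ^ ((p : ℝ) / 2) * (∏ j, d j) ^ (-(1 : ℝ) / 2)
          * ∏ j, g j ^ a * (1 - g j) ^ (b - 1) * (κ + g j ^ 2) ^ (-(1 : ℝ) / 2)
              * Real.exp (κ * ((Xᵀ *ᵥ y) j) ^ 2 / (2 * σ2 * d j * (κ + g j ^ 2))) := by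
  set e : Fin p → ℝ := fun j => d j * (1 + κ⁻¹ * g j ^ 2)
  have he : ∀ j, 0 < e j := fun j => by have := hd j; positivity
  have hκp : κ ^ ((p : ℝ) / 2) = ∏ _j : Fin p, κ ^ ((1 : ℝ) / 2) := by
    rw [prod_const, card_univ, Fintype.card_fin, ← Real.rpow_natCast, ← Real.rpow_mul hκ.le]
    ring_nf
  rw [hX, diagonal_add_smul_diagonal_mul_diagonal_mul_diagonal,
    inv_diagonal_of_ne_zero fun j => (he j).ne',
    dotProduct_mulVec_diagonal_mulVec_transpose_mulVec, one_sub_diagonal,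
    det_diagonal_rpow (fun j => (hg j).1.le), det_diagonal_rpow (fun j => sub_nonneg.2 (hg j).2.le),
    det_diagonal_rpow (fun j => (he j).le), mul_sum, Real.exp_sum, hκp,
    ← Real.finsetProd_rpow _ _ fun j _ => (hd j).le]
  simp only [← prod_mul_distrib]
  refine prod_congr rfl fun j _ => ?_
  rw [Real.rpow_neg_half_mul_one_add_inv_mul hκ (hd j).le (sq_nonneg _)]
  have hexp : 1 / (2 * σ2) * ((e⁻¹) j * (Xᵀ *ᵥ y) j ^ 2)
      = κ * (Xᵀ *ᵥ y) j ^ 2 / (2 * σ2 * d j * (κ + g j ^ 2)) := by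
    simp only [e, Pi.inv_apply]
    field_simp
  rw [hexp]
  ring

/-- Under an orthogonal design (`XᵀX = diag(d)`, `dⱼ > 0`), the unnormalized marginal
posterior density of `G = diag(g)` factorizes as a product over coordinates; hence the
`gⱼ`'s are a posteriori independent under orthogonality. -/
theorem kappaG_posterior_G_factorizes {n p : ℕ} (X : Matrix (Fin n) (Fin p) ℝ)
    (y : Fin n → ℝ) (d : Fin p → ℝ) (hd : ∀ j, 0 < d j)
    (hX : Xᵀ * X = Matrix.diagonal d) (σ2 κ a b : ℝ)
    (hσ : 0 < σ2) (hκ : 0 < κ) (ha : 0 < a) (hb : 0 < b)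
    (g : Fin p → ℝ) (hg : ∀ j, g j ∈ Set.Ioo (0 : ℝ) 1) :
    (Matrix.diagonal g).det ^ a * (1 - Matrix.diagonal g).det ^ (b - 1)
        * (Xᵀ * X + κ⁻¹ • (Matrix.diagonal g * (Xᵀ * X) * Matrix.diagonal g)).det ^ (-(1 : ℝ) / 2)
        * Real.exp ((1 / (2 * σ2)) * (y ⬝ᵥ (X *ᵥ
            ((Xᵀ * X + κ⁻¹ • (Matrix.diagonal g * (Xᵀ * X) * Matrix.diagonal g))⁻¹
              *ᵥ (Xᵀ *ᵥ y)))))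
      = κ ^ ((p : ℝ) / 2) * (∏ j, d j) ^ (-(1 : ℝ) / 2)
          * ∏ j, g j ^ a * (1 - g j) ^ (b - 1) * (κ + g j ^ 2) ^ (-(1 : ℝ) / 2)
              * Real.exp (κ * ((Xᵀ *ᵥ y) j) ^ 2 / (2 * σ2 * d j * (κ + g j ^ 2))) :=
  kappaG_posterior_G_factorizes_general X y d hd hX σ2 κ a b hκ g hg
end

section
/- Let X be an n×p real matrix whose Gram matrix is diagonal with positive entries, XᵀX = diag(d₁,…,d_p) with each dⱼ > 0 (orthogonal design), let y ∈ ℝⁿ, κ > 0, and G = diag(g₁,…,g_p) with gⱼ ∈ [0,1]. Then the κ-G posterior mean is diagonal-rescaled OLS: for every j, the j-th entry of μ̃ = (XᵀX + κ⁻¹ G XᵀX G)⁻¹ Xᵀy equals (κ/(κ + gⱼ²)) · (xⱼᵀy)/dⱼ = (κ/(κ + gⱼ²)) · β̂ⱼ^{OLS}, where xⱼ is the j-th column of X. In particular, if gⱼ = 0 then μ̃ⱼ = β̂ⱼ^{OLS}, and μ̃ⱼ → β̂ⱼ^{OLS} as gⱼ → 0. -/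
/-!
When `XᵀX = diag d`, the posterior precision `XᵀX + κ⁻¹ G XᵀX G` is itself diagonal, with
entries `dᵢ (1 + gᵢ²/κ)`, so inverting it acts coordinatewise.
-/

open Matrix

theorem Matrix.inv_diagonal_of_ne_zero_s14 {ι K : Type*} [Fintype ι] [DecidableEq ι] [Field K]
    {v : ι → K} (hv : ∀ i, v i ≠ 0) : (diagonal v)⁻¹ = diagonal v⁻¹ :=
  inv_eq_right_inv <| by
    rw [diagonal_mul_diagonal, ← diagonal_one]
    exact congrArg diagonal (funext fun i => mul_inv_cancel₀ (hv i))

theorem Matrix.diagonal_add_smul_diagonal_mul_diagonal_mul_diagonal_s14 {ι R : Type*}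
    [Fintype ι] [DecidableEq ι] [CommRing R] (c : R) (d g : ι → R) :
    diagonal d + c • (diagonal g * diagonal d * diagonal g)
      = diagonal fun i => d i * (1 + c * g i ^ 2) := by
  rw [diagonal_mul_diagonal, diagonal_mul_diagonal, ← diagonal_smul, diagonal_add]
  congr 1
  ext i
  simp only [Pi.smul_apply, smul_eq_mul]
  ring

theorem kappaG_posterior_mean_orthogonal_general {n p : ℕ} (X : Matrix (Fin n) (Fin p) ℝ)
    (y : Fin n → ℝ) (d : Fin p → ℝ) (hd : ∀ j, 0 < d j)
    (hX : Xᵀ * X = Matrix.diagonal d) (κ : ℝ) (hκ : 0 < κ)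
    (g : Fin p → ℝ) (j : Fin p) :
    ((Xᵀ * X + κ⁻¹ • (Matrix.diagonal g * (Xᵀ * X) * Matrix.diagonal g))⁻¹
        *ᵥ (Xᵀ *ᵥ y)) j
      = (κ / (κ + g j ^ 2)) * ((Xᵀ *ᵥ y) j / d j) := by
  have hfactor_pos : ∀ i, 0 < 1 + κ⁻¹ * g i ^ 2 := fun i => by positivity
  rw [hX, diagonal_add_smul_diagonal_mul_diagonal_mul_diagonal_s14,
    inv_diagonal_of_ne_zero_s14 fun i => (mul_pos (hd i) (hfactor_pos i)).ne', mulVec_diagonal,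
    Pi.inv_apply]
  have hdj : d j ≠ 0 := (hd j).ne'
  field_simp

/-- Under an orthogonal design (`XᵀX = diag(d)`, `dⱼ > 0`), the κ-G posterior mean is
diagonal-rescaled OLS: the `j`-th entry of `μ̃ = (XᵀX + κ⁻¹ G XᵀX G)⁻¹ Xᵀy` equals
`(κ/(κ + gⱼ²))·(xⱼᵀy)/dⱼ = (κ/(κ + gⱼ²))·β̂ⱼ^{OLS}`. -/
theorem kappaG_posterior_mean_orthogonal {n p : ℕ} (X : Matrix (Fin n) (Fin p) ℝ)
    (y : Fin n → ℝ) (d : Fin p → ℝ) (hd : ∀ j, 0 < d j)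
    (hX : Xᵀ * X = Matrix.diagonal d) (κ : ℝ) (hκ : 0 < κ)
    (g : Fin p → ℝ) (hg : ∀ j, g j ∈ Set.Icc (0 : ℝ) 1) (j : Fin p) :
    ((Xᵀ * X + κ⁻¹ • (Matrix.diagonal g * (Xᵀ * X) * Matrix.diagonal g))⁻¹
        *ᵥ (Xᵀ *ᵥ y)) j
      = (κ / (κ + g j ^ 2)) * ((Xᵀ *ᵥ y) j / d j) :=
  kappaG_posterior_mean_orthogonal_general X y d hd hX κ hκ g j
end
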